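/- Let Φ be an irreducible reduced root system with base Π and J ⊆ Π such that the relative root system Φ_J has rank ≥ 2. For any relative root α₀ ∈ Φ_J there exist positive relative roots α₁, …, α_n ∈ Φ_J⁺ such that: (1) each partial sum α₀ + α₁ + ⋯ + α_i is a relative root; (2) α₀ + α₁ + ⋯ + α_n equals the maximal relative root α̃; and (3) for each i, there are no positive integers m, k with m(α₀ + ⋯ + α_i) = −k·α_{i+1}. -/

import Mathlib

open scoped RealInnerProductSpace

/-- A reduced root system `Φ` with a fixed base (system of simple roots) `base`
in a real inner product space. -/
structure RootSystemData (V : Type) [NormedAddCommGroup V] [InnerProductSpace ℝ V] where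
  Φ : Set V
  base : Finset V
  finite : Φ.Finite
  zero_notMem : (0:V) ∉ Φ
  neg_mem : ∀ a ∈ Φ, -a ∈ Φ
  reduced : ∀ a ∈ Φ, ∀ t : ℝ, t • a ∈ Φ → t = 1 ∨ t = -1
  reflect_mem : ∀ a ∈ Φ, ∀ b ∈ Φ, b - (2 * (inner ℝ a b : ℝ) / (inner ℝ a a : ℝ)) • a ∈ Φ
  cartan_int : ∀ a ∈ Φ, ∀ b ∈ Φ, ∃ n : ℤ, 2 * (inner ℝ a b : ℝ) / (inner ℝ a a : ℝ) = (n : ℝ)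
  base_sub : ↑base ⊆ Φ
  base_indep : LinearIndependent ℝ (fun b : base => (b : V))
  base_gen : ∀ a ∈ Φ,
    (∃ c : V → ℕ, a = ∑ b ∈ base, c b • b) ∨ (∃ c : V → ℕ, -a = ∑ b ∈ base, c b • b)

namespace RootSystemData

variable {V : Type} [NormedAddCommGroup V] [InnerProductSpace ℝ V] (RS : RootSystemData V)

/-- `a` is a nonnegative integral combination of the simple roots. -/
def IsPos (a : V) : Prop := ∃ c : V → ℕ, a = ∑ b ∈ RS.base, c b • b

/-- The quotient space `V / ⟨Π ∖ J⟩`, ambient space of the relative roots. -/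
abbrev Qspace (J : Finset V) : Type :=
  V ⧸ Submodule.span ℝ ((RS.base : Set V) \ (J : Set V))

/-- The canonical projection `π : V → V / ⟨Π ∖ J⟩`. -/
def proj (J : Finset V) : V →ₗ[ℝ] RS.Qspace J :=
  Submodule.mkQ _

/-- The set of relative roots `Φ_J = π(Φ) ∖ {0}`. -/
def relRoots (J : Finset V) : Set (RS.Qspace J) := (RS.proj J '' RS.Φ) \ {0}

/-- `β` is a simple relative root: a nonzero image of a simple root in `J`. -/
def IsSimpleRel (J : Finset V) (β : RS.Qspace J) : Prop :=
  β ≠ 0 ∧ ∃ b ∈ J, β = RS.proj J b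

/-- `β` is a positive relative root: a relative root that is a nonnegative
integral combination of the simple relative roots. -/
def IsPosRel (J : Finset V) (β : RS.Qspace J) : Prop :=
  β ∈ RS.relRoots J ∧ ∃ c : V → ℕ, β = ∑ b ∈ J, c b • RS.proj J b

/-- `a` is maximal in `S` with respect to the base `Π`. -/
def IsMaximalIn (S : Set V) (a : V) : Prop := a ∈ S ∧ ∀ b ∈ RS.base, a + b ∉ S

/-- `a` is minimal in `S` with respect to the base `Π`. -/
def IsMinimalIn (S : Set V) (a : V) : Prop := a ∈ S ∧ ∀ b ∈ RS.base, a - b ∉ S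

/-- `a` is the highest root: every root is obtained from it by subtracting a
nonnegative combination of simple roots. -/
def IsHighest (a : V) : Prop :=
  a ∈ RS.Φ ∧ ∀ b ∈ RS.Φ, ∃ c : V → ℕ, a - b = ∑ x ∈ RS.base, c x • x

/-- `S` is an irreducible component of `Φ`: a nonempty subset orthogonal to its
complement admitting no further nontrivial orthogonal splitting. -/
def IsComponent (S : Set V) : Prop :=
  S ⊆ RS.Φ ∧ S.Nonempty ∧ (∀ a ∈ S, ∀ b ∈ RS.Φ \ S, (inner ℝ a b : ℝ) = 0) ∧
    ∀ T ⊆ S, T.Nonempty → (∀ a ∈ T, ∀ b ∈ RS.Φ \ T, (inner ℝ a b : ℝ) = 0) → T = S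

/-- The root system is irreducible. -/
def Irred : Prop := RS.IsComponent RS.Φ

end RootSystemData

/-!
Write `θ = π α̃` and give the quotient `V / ⟨Π ∖ J⟩` the inner product of the representatives
in `⟨Π ∖ J⟩ᗮ`. Averaging a fiber of `π` over the reflections in `Π ∖ J` shows that two relative
roots at an obtuse angle add up to a relative root (or to `0`), exactly as for roots.

It then suffices to find, for each relative root `σ ≠ θ`, a positive relative root `f` with
`σ + f` a relative root and `f` not a negative multiple of `σ`, and to induct on the height of
`θ - σ`. If `σ` is positive, take a simple relative root at an obtuse angle with `σ`, or
`f = θ - σ` when `σ` is dominant. If `σ` is negative, any positive `τ` off the line `ℝ σ` with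
`⟪σ, τ⟫ ≠ 0` works, as `f = τ` or `f = τ - σ`. Such a `τ` exists, since otherwise `⟪σ, ·⟫` would
vanish on the positive relative roots off `ℝ σ`, and these span `σ`: by irreducibility `θ`
involves every simple root, and `J` has at least two elements.
-/

lemma add_ne_zero_of_not_sameRay_neg {M : Type*} [AddCommGroup M] [Module ℝ M] {x y : M}
    (h : ¬SameRay ℝ x (-y)) : x + y ≠ 0 := fun h0 =>
  h (neg_eq_of_add_eq_zero_left h0 ▸ SameRay.rfl)

lemma mem_span_singleton_of_sameRay {M : Type*} [AddCommGroup M] [Module ℝ M] {x y : M}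
    (h : SameRay ℝ x y) (hx : x ≠ 0) : y ∈ ℝ ∙ x := by
  obtain ⟨r, -, rfl⟩ := h.exists_nonneg_left hx
  exact Submodule.smul_mem _ r (Submodule.mem_span_singleton_self x)

lemma inner_sum_nsmul_left {F : Type*} [NormedAddCommGroup F] [InnerProductSpace ℝ F]
    (s : Finset F) (c : F → ℕ) (v : F) :
    ⟪∑ b ∈ s, c b • b, v⟫ = ∑ b ∈ s, (c b : ℝ) * ⟪b, v⟫ := by
  simp only [sum_inner, ← Nat.cast_smul_eq_nsmul ℝ, real_inner_smul_left]

lemma exists_sum_nsmul_eq_add {M : Type*} [AddCommMonoid M] {s : Finset M} {c : M → ℕ} {x : M}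
    (hx : x ∈ s) (hcx : c x ≠ 0) :
    ∃ c' : M → ℕ, ∑ b ∈ s, c b • b = ∑ b ∈ s, c' b • b + x ∧
      ∑ b ∈ s, c b = ∑ b ∈ s, c' b + 1 := by
  classical
  set c' := c - Pi.single x 1
  have hc : ∀ b, c b = c' b + if b = x then 1 else 0 := by
    intro b
    by_cases hb : b = x <;> simp [c', hb]
    omega
  refine ⟨c', ?_, ?_⟩
  · rw [Finset.sum_congr rfl fun b _ => by rw [hc b]]
    simp [add_smul, Finset.sum_add_distrib, hx]
  · rw [Finset.sum_congr rfl fun b _ => hc b]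
    simp [Finset.sum_add_distrib, hx]

namespace RootSystemData

open Submodule (span)
open scoped Classical

variable {V : Type} [NormedAddCommGroup V] [InnerProductSpace ℝ V] {RS : RootSystemData V}

/-! ### Roots and the coordinates of the simple roots -/

lemma ne_zero_of_mem {a : V} (ha : a ∈ RS.Φ) : a ≠ 0 := fun h => RS.zero_notMem (h ▸ ha)

lemma inner_self_pos_of_mem {a : V} (ha : a ∈ RS.Φ) : 0 < ⟪a, a⟫ :=
  real_inner_self_pos.mpr (ne_zero_of_mem ha)

lemma add_mem_of_inner_neg {a b : V} (ha : a ∈ RS.Φ) (hb : b ∈ RS.Φ) (hab : ⟪a, b⟫ < 0)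
    (hne : a + b ≠ 0) : a + b ∈ RS.Φ := by
  obtain ⟨n, hn⟩ := RS.cartan_int a ha b hb
  obtain ⟨m, hm⟩ := RS.cartan_int b hb a ha
  rw [real_inner_comm] at hm
  by_cases hn1 : n = -1
  · have := RS.reflect_mem a ha b hb
    rw [hn, hn1] at this
    simpa [add_comm] using this
  by_cases hm1 : m = -1
  · have := RS.reflect_mem b hb a ha
    rw [real_inner_comm a b, hm, hm1] at this
    simpa using this
  -- Both Cartan integers are negative; if neither is `-1`, then `‖a + b‖² ≤ 0`.
  have haa := inner_self_pos_of_mem ha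
  have hbb := inner_self_pos_of_mem hb
  rw [div_eq_iff haa.ne'] at hn
  rw [div_eq_iff hbb.ne'] at hm
  have hn2 : (n : ℝ) ≤ -2 := by
    have : n < 0 := by exact_mod_cast (by nlinarith : (n : ℝ) < 0)
    exact_mod_cast (by omega : n ≤ -2)
  have hm2 : (m : ℝ) ≤ -2 := by
    have : m < 0 := by exact_mod_cast (by nlinarith : (m : ℝ) < 0)
    exact_mod_cast (by omega : m ≤ -2)
  refine absurd (real_inner_self_nonpos.mp ?_) hne
  rw [real_inner_add_add_self]
  nlinarith

lemma sub_mem_of_inner_pos {a b : V} (ha : a ∈ RS.Φ) (hb : b ∈ RS.Φ) (hab : 0 < ⟪a, b⟫)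
    (hne : a ≠ b) : a - b ∈ RS.Φ := by
  rw [sub_eq_add_neg]
  exact add_mem_of_inner_neg ha (RS.neg_mem b hb) (by rwa [inner_neg_right, neg_lt_zero])
    (by rwa [← sub_eq_add_neg, sub_ne_zero])

variable (RS) in
lemma exists_dual_family :
    ∃ co : V → V →ₗ[ℝ] ℝ, ∀ x, ∀ y ∈ RS.base, co x y = if y = x then 1 else 0 := by
  have hli : LinearIndepOn ℝ id (RS.base : Set V) := RS.base_indep
  let b := Module.Basis.extend hli
  refine ⟨fun x => if hx : x ∈ hli.extend (Set.subset_univ _) then b.coord ⟨x, hx⟩ else 0, ?_⟩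
  intro x y hy
  have hy' := hli.subset_extend (Set.subset_univ _) hy
  dsimp only
  by_cases hx : x ∈ hli.extend (Set.subset_univ _)
  · have hb : b ⟨y, hy'⟩ = y := Module.Basis.extend_apply_self hli _
    rw [dif_pos hx, ← hb, Module.Basis.coord_apply, b.repr_self, Finsupp.single_apply]
    simp [Subtype.ext_iff, hb]
  · rw [dif_neg hx, if_neg (by rintro rfl; exact hx hy')]
    rfl

variable (RS) in
noncomputable def coord : V → V →ₗ[ℝ] ℝ := RS.exists_dual_family.choose

lemma coord_apply (x : V) {y : V} (hy : y ∈ RS.base) :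
    RS.coord x y = if y = x then 1 else 0 :=
  RS.exists_dual_family.choose_spec x y hy

lemma coord_sum {s : Finset V} (hs : s ⊆ RS.base) {x : V} (hx : x ∈ s) (c : V → ℕ) :
    RS.coord x (∑ b ∈ s, c b • b) = c x := by
  rw [map_sum, Finset.sum_eq_single_of_mem x hx]
  · simp [coord_apply x (hs hx)]
  · intro b hb hbx
    simp [coord_apply x (hs hb), hbx]

lemma IsPos.coord_nonneg {a : V} (ha : RS.IsPos a) {x : V} (hx : x ∈ RS.base) :
    0 ≤ RS.coord x a := by
  obtain ⟨c, rfl⟩ := ha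
  rw [coord_sum subset_rfl hx]
  positivity

lemma coord_eq_zero_of_mem_span {x : V} {T : Finset V} (hT : T ⊆ RS.base) (hxT : x ∉ T)
    {u : V} (hu : u ∈ span ℝ (T : Set V)) : RS.coord x u = 0 := by
  refine (Submodule.span_le (p := LinearMap.ker (RS.coord x)).mpr (fun y hy => ?_)) hu
  rw [SetLike.mem_coe, LinearMap.mem_ker, coord_apply x (hT hy), if_neg]
  rintro rfl
  exact hxT hy

lemma sum_nsmul_mem_span {S : Finset V} {c : V → ℕ} (hc : ∀ b ∈ RS.base, b ∉ S → c b = 0) :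
    ∑ b ∈ RS.base, c b • b ∈ span ℝ (S : Set V) := by
  refine Submodule.sum_mem _ fun b hb => ?_
  by_cases hbS : b ∈ S
  · exact Submodule.smul_of_tower_mem _ _ (Submodule.subset_span hbS)
  · simp [hc b hb hbS]

lemma inner_nonpos_of_mem_base {x y : V} (hx : x ∈ RS.base) (hy : y ∈ RS.base) (hne : x ≠ y) :
    ⟪x, y⟫ ≤ 0 := by
  by_contra! hpos
  have hxy := sub_mem_of_inner_pos (RS.base_sub hx) (RS.base_sub hy) hpos hne
  rcases RS.base_gen _ hxy with h | h
  · have := IsPos.coord_nonneg h hy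
    norm_num [coord_apply y hx, coord_apply y hy, hne] at this
  · have := IsPos.coord_nonneg h hx
    norm_num [coord_apply x hx, coord_apply x hy, hne.symm] at this

/-! ### Irreducibility and the highest root -/

section Orthogonal

variable {S T : Finset V}

/-- The reflection in `x` sends `a` to `(a - x) - x`, whose coefficients have mixed signs unless
`a` is a multiple of `x`. -/
lemma mem_span_of_sub_mem_span (hST : S ∪ T = RS.base) (hdisj : Disjoint S T)
    (horth : ∀ x ∈ S, ∀ y ∈ T, ⟪x, y⟫ = 0) {a x : V} (ha : a ∈ RS.Φ) (hapos : RS.IsPos a)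
    (hx : x ∈ S) (hax : a - x ∈ span ℝ (T : Set V)) : a ∈ span ℝ (S : Set V) := by
  have hxb : x ∈ RS.base := hST ▸ Finset.mem_union_left T hx
  have hxT : x ∉ T := Finset.disjoint_left.mp hdisj hx
  have hTb : T ⊆ RS.base := hST ▸ Finset.subset_union_right
  have hxx := inner_self_pos_of_mem (RS.base_sub hxb)
  have hxax : ⟪x, a - x⟫ = 0 :=
    (Submodule.isOrtho_span.mpr horth).inner_eq (Submodule.subset_span hx) hax
  have hrefl : (a - x) - x ∈ RS.Φ := by
    have := RS.reflect_mem x (RS.base_sub hxb) a ha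
    rw [inner_sub_right, sub_eq_zero] at hxax
    rwa [hxax, mul_div_assoc, div_self hxx.ne', mul_one, two_smul, ← sub_sub] at this
  have hcoord : RS.coord x (a - x) = 0 := coord_eq_zero_of_mem_span hTb hxT hax
  rcases RS.base_gen _ hrefl with h | h
  · have := IsPos.coord_nonneg h hxb
    rw [map_sub, hcoord, coord_apply x hxb, if_pos rfl] at this
    norm_num at this
  · obtain ⟨c, rfl⟩ := hapos
    refine sum_nsmul_mem_span fun z hz hzS => ?_
    have hzT : z ∈ T := (Finset.mem_union.mp (hST ▸ hz)).resolve_left hzS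
    have hzx : x ≠ z := fun h => hxT (h ▸ hzT)
    have := IsPos.coord_nonneg h hz
    rw [map_neg, map_sub, map_sub, coord_sum subset_rfl hz, coord_apply z hxb, if_neg hzx] at this
    exact_mod_cast (by linarith : (c z : ℝ) ≤ 0).antisymm (Nat.cast_nonneg _)

lemma mem_span_or_mem_span_of_eq_sum (hST : S ∪ T = RS.base) (hdisj : Disjoint S T)
    (horth : ∀ x ∈ S, ∀ y ∈ T, ⟪x, y⟫ = 0) (n : ℕ) :
    ∀ a ∈ RS.Φ, ∀ c : V → ℕ, a = ∑ b ∈ RS.base, c b • b → ∑ b ∈ RS.base, c b ≤ n →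
      a ∈ span ℝ (S : Set V) ∨ a ∈ span ℝ (T : Set V) := by
  induction n with
  | zero =>
    intro a ha c hac hc
    refine absurd ?_ (ne_zero_of_mem ha)
    rw [hac, Finset.sum_eq_zero]
    intro b hb
    simp [Finset.sum_eq_zero_iff.mp (Nat.le_zero.mp hc) b hb]
  | succ n ih =>
    intro a ha c hac hc
    by_contra! hmix
    obtain ⟨x, hxb, hx⟩ : ∃ x ∈ RS.base, 0 < (c x : ℝ) * ⟪x, a⟫ := by
      have h0 : ∑ _b ∈ RS.base, (0 : ℝ) < ∑ b ∈ RS.base, (c b : ℝ) * ⟪b, a⟫ := by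
        rw [Finset.sum_const_zero, ← inner_sum_nsmul_left, ← hac]
        exact inner_self_pos_of_mem ha
      exact Finset.exists_lt_of_sum_lt h0
    have ⟨hcx, hxa⟩ := (pos_and_pos_or_neg_and_neg_of_mul_pos hx).resolve_right
      fun h => (Nat.cast_nonneg _).not_gt h.1
    have hxST := hST ▸ hxb
    have hne : a ≠ x := by
      rintro rfl
      rcases Finset.mem_union.mp hxST with h | h
      · exact hmix.1 (Submodule.subset_span h)
      · exact hmix.2 (Submodule.subset_span h)
    obtain ⟨c', hc'a, hc'⟩ := exists_sum_nsmul_eq_add hxb (Nat.cast_pos.mp hcx).ne'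
    have hax := sub_mem_of_inner_pos ha (RS.base_sub hxb) (by rwa [real_inner_comm]) hne
    have hTS : T ∪ S = RS.base := Finset.union_comm T S ▸ hST
    have horth' : ∀ x ∈ T, ∀ y ∈ S, ⟪x, y⟫ = 0 := fun x hx y hy => by
      rw [real_inner_comm]; exact horth y hy x hx
    have hapos : RS.IsPos a := ⟨c, hac⟩
    rcases ih (a - x) hax c' (by rw [hac, hc'a, add_sub_cancel_right]) (by omega) with h | h <;>
      rcases Finset.mem_union.mp hxST with hx | hx
    · exact hmix.1 (by simpa using add_mem h (Submodule.subset_span hx))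
    · exact hmix.2 (mem_span_of_sub_mem_span hTS hdisj.symm horth' ha hapos hx h)
    · exact hmix.1 (mem_span_of_sub_mem_span hST hdisj horth ha hapos hx h)
    · exact hmix.2 (by simpa using add_mem h (Submodule.subset_span hx))

lemma mem_span_or_mem_span (hST : S ∪ T = RS.base) (hdisj : Disjoint S T)
    (horth : ∀ x ∈ S, ∀ y ∈ T, ⟪x, y⟫ = 0) {a : V} (ha : a ∈ RS.Φ) :
    a ∈ span ℝ (S : Set V) ∨ a ∈ span ℝ (T : Set V) := by
  rcases RS.base_gen a ha with ⟨c, hc⟩ | ⟨c, hc⟩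
  · exact mem_span_or_mem_span_of_eq_sum hST hdisj horth _ a ha c hc le_rfl
  · simpa using mem_span_or_mem_span_of_eq_sum hST hdisj horth _ (-a) (RS.neg_mem a ha) c hc le_rfl

end Orthogonal

lemma isPos_of_mem_base {x : V} (hx : x ∈ RS.base) : RS.IsPos x :=
  ⟨fun b => if b = x then 1 else 0, by simp [ite_smul, hx]⟩

lemma IsPos.add {a b : V} (ha : RS.IsPos a) (hb : RS.IsPos b) : RS.IsPos (a + b) := by
  obtain ⟨c, rfl⟩ := ha
  obtain ⟨d, rfl⟩ := hb
  exact ⟨c + d, by simp [add_smul, Finset.sum_add_distrib]⟩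

namespace IsHighest

variable {atil : V}

lemma isPos (hatil : RS.IsHighest atil) (hne : RS.base.Nonempty) : RS.IsPos atil := by
  obtain ⟨x, hx⟩ := hne
  simpa using IsPos.add (hatil.2 x (RS.base_sub hx)) (isPos_of_mem_base hx)

lemma inner_nonneg (hatil : RS.IsHighest atil) {x : V} (hx : x ∈ RS.base) : 0 ≤ ⟪atil, x⟫ := by
  by_contra! hlt
  have hxΦ := RS.base_sub hx
  have hne : atil + x ≠ 0 := fun h0 => by
    have := IsPos.coord_nonneg (hatil.2 x hxΦ) hx
    rw [eq_neg_of_add_eq_zero_left h0, map_sub, map_neg, coord_apply x hx, if_pos rfl] at this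
    norm_num at this
  have := IsPos.coord_nonneg (hatil.2 _ (add_mem_of_inner_neg hatil.1 hxΦ hlt hne)) hx
  rw [sub_add_cancel_left, map_neg, coord_apply x hx, if_pos rfl] at this
  norm_num at this

/-- The simple roots not involved in the highest root are orthogonal to those that are, so
irreducibility leaves none of them. -/
lemma coord_pos (hatil : RS.IsHighest atil) (hirr : RS.Irred) {x : V} (hx : x ∈ RS.base) :
    0 < RS.coord x atil := by
  obtain ⟨d, hd⟩ := hatil.isPos ⟨x, hx⟩
  set S := RS.base.filter (d · = 0)
  set T := RS.base.filter (d · ≠ 0)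
  have hST : S ∪ T = RS.base := Finset.filter_union_filter_not_eq _ _
  have hdisj : Disjoint S T := Finset.disjoint_filter_filter_not _ _ _
  have horth : ∀ s ∈ S, ∀ t ∈ T, ⟪s, t⟫ = 0 := by
    intro s hs t ht
    obtain ⟨hsb, hds⟩ := Finset.mem_filter.mp hs
    obtain ⟨htb, hdt⟩ := Finset.mem_filter.mp ht
    have hterm : ∀ b ∈ RS.base, (d b : ℝ) * ⟪b, s⟫ ≤ 0 := fun b hb => by
      by_cases hbs : b = s
      · simp [hbs, hds]
      · exact mul_nonpos_of_nonneg_of_nonpos (Nat.cast_nonneg _)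
          (inner_nonpos_of_mem_base hb hsb hbs)
    have hsum : ∑ b ∈ RS.base, (d b : ℝ) * ⟪b, s⟫ = 0 :=
      (Finset.sum_nonpos hterm).antisymm (by
        rw [← inner_sum_nsmul_left, ← hd]; exact hatil.inner_nonneg hsb)
    have := (Finset.sum_eq_zero_iff_of_nonpos hterm).mp hsum t htb
    rw [real_inner_comm]
    exact (mul_eq_zero.mp this).resolve_left (by exact_mod_cast hdt)
  set 𝒯 : Set V := {a ∈ RS.Φ | a ∈ span ℝ (T : Set V)}
  have hatil𝒯 : atil ∈ 𝒯 :=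
    ⟨hatil.1, hd ▸ sum_nsmul_mem_span fun b hb hbT => by simpa [T, hb] using hbT⟩
  have horth𝒯 : ∀ a ∈ 𝒯, ∀ b ∈ RS.Φ \ 𝒯, ⟪a, b⟫ = 0 := by
    rintro a ⟨-, haT⟩ b ⟨hb, hbT⟩
    have hbS := (mem_span_or_mem_span hST hdisj horth hb).resolve_right fun h => hbT ⟨hb, h⟩
    exact (Submodule.isOrtho_span.mpr horth).symm.inner_eq haT hbS
  have hspan : 𝒯 = RS.Φ := hirr.2.2.2 𝒯 (fun a ha => ha.1) ⟨atil, hatil𝒯⟩ horth𝒯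
  by_contra! hx0
  have hxT : x ∉ T := by
    have : (d x : ℝ) ≤ 0 := by rwa [← coord_sum subset_rfl hx d, ← hd]
    simp only [T, Finset.mem_filter, not_and, not_not]
    exact fun _ => by exact_mod_cast this.antisymm (Nat.cast_nonneg _)
  have := coord_eq_zero_of_mem_span (Finset.filter_subset _ _) hxT
    (hspan.symm ▸ RS.base_sub hx : x ∈ 𝒯).2
  rw [coord_apply x hx, if_pos rfl] at this
  exact one_ne_zero this

end IsHighest

/-! ### The inner product of relative roots -/

section Relative

variable {J : Finset V}

variable (RS) in
abbrev projKer (J : Finset V) : Submodule ℝ V := span ℝ ((RS.base : Set V) \ (J : Set V))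

instance (J : Finset V) : FiniteDimensional ℝ (RS.projKer J) :=
  FiniteDimensional.span_of_finite ℝ (RS.base.finite_toSet.sdiff)

lemma proj_eq_zero_iff {v : V} : RS.proj J v = 0 ↔ v ∈ RS.projKer J :=
  Submodule.Quotient.mk_eq_zero _

lemma proj_eq_zero_of_mem_base {b : V} (hb : b ∈ RS.base) (hbJ : b ∉ J) : RS.proj J b = 0 :=
  proj_eq_zero_iff.mpr (Submodule.subset_span ⟨hb, hbJ⟩)

lemma proj_sum_base (hJ : J ⊆ RS.base) (c : V → ℕ) :
    RS.proj J (∑ b ∈ RS.base, c b • b) = ∑ b ∈ J, c b • RS.proj J b := by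
  rw [map_sum, ← Finset.sum_sdiff hJ, Finset.sum_eq_zero, zero_add]
  · simp only [map_nsmul]
  · intro b hb
    rw [Finset.mem_sdiff] at hb
    rw [map_nsmul, proj_eq_zero_of_mem_base hb.1 hb.2, smul_zero]

variable (RS J) in
/-- The representative in `⟨Π ∖ J⟩ᗮ`; relative roots are compared through the inner products of
their representatives. -/
noncomputable def orthRep : RS.Qspace J →ₗ[ℝ] V :=
  (RS.projKer J)ᗮ.subtype ∘ₗ
    (Submodule.quotientEquivOfIsCompl _ _ (Submodule.isCompl_orthogonal _)).toLinearMap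

lemma proj_orthRep (ξ : RS.Qspace J) : RS.proj J (RS.orthRep J ξ) = ξ :=
  (Submodule.quotientEquivOfIsCompl_symm_apply _ _ _ _).symm.trans
    (LinearEquiv.symm_apply_apply _ _)

lemma orthRep_mem_orthogonal (ξ : RS.Qspace J) : RS.orthRep J ξ ∈ (RS.projKer J)ᗮ :=
  Submodule.coe_mem _

lemma orthRep_proj_of_mem {w : V} (hw : w ∈ (RS.projKer J)ᗮ) : RS.orthRep J (RS.proj J w) = w :=
  congrArg Subtype.val
    (Submodule.quotientEquivOfIsCompl_apply_mk_right (Submodule.isCompl_orthogonal _) ⟨w, hw⟩)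

lemma inner_orthRep_proj (ξ : RS.Qspace J) (v : V) :
    ⟪RS.orthRep J ξ, RS.orthRep J (RS.proj J v)⟫ = ⟪RS.orthRep J ξ, v⟫ := by
  have hker : RS.orthRep J (RS.proj J v) - v ∈ RS.projKer J := by
    rw [← proj_eq_zero_iff, map_sub, proj_orthRep, sub_self]
  have := Submodule.inner_left_of_mem_orthogonal hker (orthRep_mem_orthogonal ξ)
  rwa [inner_sub_right, sub_eq_zero] at this

lemma orthRep_ne_zero {ξ : RS.Qspace J} (hξ : ξ ≠ 0) : RS.orthRep J ξ ≠ 0 := fun h =>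
  hξ (by rw [← proj_orthRep ξ, h, map_zero])

variable (RS J) in
noncomputable def fiber (ξ : RS.Qspace J) : Finset V := RS.finite.toFinset.filter (RS.proj J · = ξ)

lemma mem_fiber {ξ : RS.Qspace J} {a : V} : a ∈ RS.fiber J ξ ↔ a ∈ RS.Φ ∧ RS.proj J a = ξ := by
  simp [fiber]

/-- The reflection in a simple root outside `J` permutes each fiber of `π` and negates the
inner product with that root. -/
lemma sum_inner_fiber_eq_zero (ξ : RS.Qspace J) {c : V} (hc : c ∈ RS.base) (hcJ : c ∉ J) :
    ∑ a ∈ RS.fiber J ξ, ⟪c, a⟫ = 0 := by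
  have hcc := (inner_self_pos_of_mem (RS.base_sub hc)).ne'
  set r : V → V := fun v => v - (2 * ⟪c, v⟫ / ⟪c, c⟫) • c
  have hr (v : V) : ⟪c, r v⟫ = -⟪c, v⟫ := by
    simp only [r, inner_sub_right, real_inner_smul_right]
    field_simp
    ring
  have hrr (v : V) : r (r v) = v := by
    change r v - (2 * ⟪c, r v⟫ / ⟪c, c⟫) • c = v
    rw [hr]
    simp only [r]
    rw [mul_neg, neg_div, neg_smul, sub_neg_eq_add, sub_add_cancel]
  have hmem (a : V) (ha : a ∈ RS.fiber J ξ) : r a ∈ RS.fiber J ξ := by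
    rw [mem_fiber] at ha ⊢
    refine ⟨RS.reflect_mem c (RS.base_sub hc) a ha.1, ?_⟩
    simp only [r, map_sub, map_smul, proj_eq_zero_of_mem_base hc hcJ, smul_zero, sub_zero, ha.2]
  have := Finset.sum_nbij' r r hmem hmem (fun a _ => hrr a) (fun a _ => hrr a)
    (g := fun a => -⟪c, a⟫) (fun a _ => by rw [hr, neg_neg])
  rw [Finset.sum_neg_distrib] at this
  linarith

lemma sum_fiber_mem_orthogonal (ξ : RS.Qspace J) :
    ∑ a ∈ RS.fiber J ξ, a ∈ (RS.projKer J)ᗮ := by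
  have hle : RS.projKer J ≤ LinearMap.ker (innerₛₗ ℝ (∑ a ∈ RS.fiber J ξ, a)) := by
    refine Submodule.span_le.mpr fun c hc => ?_
    rw [SetLike.mem_coe, LinearMap.mem_ker, innerₛₗ_apply_apply, sum_inner]
    simp_rw [real_inner_comm c]
    exact sum_inner_fiber_eq_zero ξ hc.1 hc.2
  refine (Submodule.mem_orthogonal _ _).mpr fun u hu => ?_
  rw [real_inner_comm]
  exact LinearMap.mem_ker.mp (hle hu)

lemma card_smul_orthRep (ξ : RS.Qspace J) :
    (RS.fiber J ξ).card • RS.orthRep J ξ = ∑ a ∈ RS.fiber J ξ, a := by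
  rw [← orthRep_proj_of_mem (sum_fiber_mem_orthogonal ξ), map_sum,
    Finset.sum_congr rfl fun a ha => (mem_fiber.mp ha).2, Finset.sum_const, map_nsmul]

lemma add_mem_relRoots_of_inner_neg {ξ η : RS.Qspace J} (hξ : ξ ∈ RS.relRoots J)
    (hη : η ∈ RS.relRoots J) (h : ⟪RS.orthRep J ξ, RS.orthRep J η⟫ < 0) (hne : ξ + η ≠ 0) :
    ξ + η ∈ RS.relRoots J := by
  obtain ⟨⟨a₀, ha₀, rfl⟩, -⟩ := hξ
  obtain ⟨⟨b, hb, rfl⟩, -⟩ := hη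
  have hcard : 0 < (RS.fiber J (RS.proj J a₀)).card :=
    Finset.card_pos.mpr ⟨a₀, mem_fiber.mpr ⟨ha₀, rfl⟩⟩
  obtain ⟨a, ha, hab⟩ : ∃ a ∈ RS.fiber J (RS.proj J a₀), ⟪a, b⟫ < 0 := by
    have : ∑ a ∈ RS.fiber J (RS.proj J a₀), ⟪a, b⟫ < ∑ a ∈ RS.fiber J (RS.proj J a₀), (0 : ℝ) := by
      rw [← sum_inner, ← card_smul_orthRep, Finset.sum_const_zero, ← Nat.cast_smul_eq_nsmul ℝ,
        real_inner_smul_left, ← inner_orthRep_proj]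
      exact mul_neg_of_pos_of_neg (by exact_mod_cast hcard) h
    simpa using Finset.exists_lt_of_sum_lt this
  obtain ⟨haΦ, hπa⟩ := mem_fiber.mp ha
  rw [← hπa, ← map_add] at hne ⊢
  exact ⟨⟨a + b, add_mem_of_inner_neg haΦ hb hab (fun h => hne (by rw [h, map_zero])), rfl⟩, hne⟩

lemma neg_mem_relRoots {ξ : RS.Qspace J} (hξ : ξ ∈ RS.relRoots J) : -ξ ∈ RS.relRoots J := by
  obtain ⟨⟨a, ha, rfl⟩, hne⟩ := hξ
  exact ⟨⟨-a, RS.neg_mem a ha, map_neg _ _⟩, neg_ne_zero.mpr hne⟩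

lemma sub_mem_relRoots_of_inner_pos {ξ η : RS.Qspace J} (hξ : ξ ∈ RS.relRoots J)
    (hη : η ∈ RS.relRoots J) (h : 0 < ⟪RS.orthRep J ξ, RS.orthRep J η⟫) (hne : ξ ≠ η) :
    ξ - η ∈ RS.relRoots J := by
  rw [sub_eq_add_neg]
  exact add_mem_relRoots_of_inner_neg hξ (neg_mem_relRoots hη)
    (by rwa [map_neg, inner_neg_right, neg_lt_zero]) (by rwa [← sub_eq_add_neg, sub_ne_zero])

/-! ### Relative coordinates and positivity -/

variable (RS) in
-- Junk for `y ∉ J`, where `coord y` need not vanish on `⟨Π ∖ J⟩`.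
noncomputable def relCoord (J : Finset V) (y : V) : RS.Qspace J →ₗ[ℝ] ℝ :=
  (RS.projKer J).liftQ (if y ∈ J then RS.coord y else 0) <| by
    split_ifs with hy
    · refine Submodule.span_le.mpr fun b hb => ?_
      rw [SetLike.mem_coe, LinearMap.mem_ker, coord_apply y hb.1, if_neg]
      rintro rfl
      exact hb.2 hy
    · simp

lemma relCoord_proj {y : V} (hy : y ∈ J) (v : V) :
    RS.relCoord J y (RS.proj J v) = RS.coord y v := by
  simp only [relCoord, proj, Submodule.mkQ_apply, Submodule.liftQ_apply, if_pos hy]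

lemma relCoord_sum (hJ : J ⊆ RS.base) {y : V} (hy : y ∈ J) (c : V → ℕ) :
    RS.relCoord J y (∑ b ∈ J, c b • RS.proj J b) = c y := by
  simp only [← map_nsmul, ← map_sum, relCoord_proj hy, coord_sum hJ hy]

variable (RS) in
noncomputable def relHeight (J : Finset V) : RS.Qspace J →ₗ[ℝ] ℝ := ∑ y ∈ J, RS.relCoord J y

lemma relHeight_sum (hJ : J ⊆ RS.base) (c : V → ℕ) :
    RS.relHeight J (∑ b ∈ J, c b • RS.proj J b) = ((∑ b ∈ J, c b : ℕ) : ℝ) := by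
  rw [relHeight, LinearMap.sum_apply, Nat.cast_sum]
  exact Finset.sum_congr rfl fun y hy => relCoord_sum hJ hy c

lemma proj_ne_zero (hJ : J ⊆ RS.base) {y : V} (hy : y ∈ J) : RS.proj J y ≠ 0 := fun h => by
  have := relCoord_proj (RS := RS) hy y
  rw [h, map_zero, coord_apply y (hJ hy), if_pos rfl] at this
  exact zero_ne_one this

lemma proj_mem_relRoots (hJ : J ⊆ RS.base) {y : V} (hy : y ∈ J) :
    RS.proj J y ∈ RS.relRoots J :=
  ⟨⟨y, RS.base_sub (hJ hy), rfl⟩, proj_ne_zero hJ hy⟩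

lemma relCoord_eq_zero_of_mem_span_singleton (hJ : J ⊆ RS.base) {y y₀ : V} (hy : y ∈ J)
    (hy₀ : y₀ ∈ J) (hne : y ≠ y₀) {ξ : RS.Qspace J} (hξ : ξ ∈ ℝ ∙ RS.proj J y₀) :
    RS.relCoord J y ξ = 0 := by
  obtain ⟨t, rfl⟩ := Submodule.mem_span_singleton.mp hξ
  rw [map_smul, relCoord_proj hy, coord_apply y (hJ hy₀), if_neg hne.symm, smul_zero]

variable (RS) in
def IsNonnegComb (J : Finset V) (ξ : RS.Qspace J) : Prop :=
  ∃ c : V → ℕ, ξ = ∑ b ∈ J, c b • RS.proj J b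

lemma IsNonnegComb.add {ξ η : RS.Qspace J} (hξ : RS.IsNonnegComb J ξ)
    (hη : RS.IsNonnegComb J η) : RS.IsNonnegComb J (ξ + η) := by
  obtain ⟨c, rfl⟩ := hξ
  obtain ⟨d, rfl⟩ := hη
  exact ⟨c + d, by simp [add_smul, Finset.sum_add_distrib]⟩

lemma isNonnegComb_proj {y : V} (hy : y ∈ J) : RS.IsNonnegComb J (RS.proj J y) :=
  ⟨fun b => if b = y then 1 else 0, by simp [ite_smul, hy]⟩

lemma isPosRel_proj (hJ : J ⊆ RS.base) {y : V} (hy : y ∈ J) : RS.IsPosRel J (RS.proj J y) :=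
  ⟨proj_mem_relRoots hJ hy, isNonnegComb_proj hy⟩

lemma IsPos.isNonnegComb_proj (hJ : J ⊆ RS.base) {a : V} (ha : RS.IsPos a) :
    RS.IsNonnegComb J (RS.proj J a) := by
  obtain ⟨c, rfl⟩ := ha
  exact ⟨c, proj_sum_base hJ c⟩

lemma isNonnegComb_or_neg (hJ : J ⊆ RS.base) {σ : RS.Qspace J} (hσ : σ ∈ RS.relRoots J) :
    RS.IsNonnegComb J σ ∨ RS.IsNonnegComb J (-σ) := by
  obtain ⟨⟨a, ha, rfl⟩, -⟩ := hσ
  rw [← map_neg]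
  exact (RS.base_gen a ha).imp (IsPos.isNonnegComb_proj hJ) (IsPos.isNonnegComb_proj hJ)

lemma IsNonnegComb.one_le_relHeight (hJ : J ⊆ RS.base) {ξ : RS.Qspace J}
    (h : RS.IsNonnegComb J ξ) (hne : ξ ≠ 0) : 1 ≤ RS.relHeight J ξ := by
  obtain ⟨c, rfl⟩ := h
  rw [relHeight_sum hJ, Nat.one_le_cast, Nat.one_le_iff_ne_zero]
  intro h0
  rw [Finset.sum_eq_zero_iff] at h0
  exact hne (Finset.sum_eq_zero fun b hb => by rw [h0 b hb, zero_smul])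

lemma IsNonnegComb.not_sameRay_neg (hJ : J ⊆ RS.base) {ξ η : RS.Qspace J}
    (hξ : RS.IsNonnegComb J ξ) (hη : RS.IsNonnegComb J η) (hξ0 : ξ ≠ 0) (hη0 : η ≠ 0) :
    ¬SameRay ℝ ξ (-η) := by
  intro h
  obtain ⟨r₁, r₂, h₁, h₂, h⟩ := h.exists_pos hξ0 (neg_ne_zero.mpr hη0)
  have := congrArg (RS.relHeight J) h
  rw [map_smul, map_smul, map_neg, smul_eq_mul, smul_eq_mul] at this
  nlinarith [hξ.one_le_relHeight hJ hξ0, hη.one_le_relHeight hJ hη0]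

lemma IsNonnegComb.mem_span {ξ : RS.Qspace J} (h : RS.IsNonnegComb J ξ) :
    ξ ∈ span ℝ (RS.proj J '' (J : Set V)) := by
  obtain ⟨c, rfl⟩ := h
  exact Submodule.sum_mem _ fun b hb =>
    Submodule.smul_of_tower_mem _ _ (Submodule.subset_span (Set.mem_image_of_mem _ hb))

lemma IsNonnegComb.inner_orthRep_nonneg {ξ η : RS.Qspace J} (h : RS.IsNonnegComb J ξ)
    (hη : ∀ y ∈ J, 0 ≤ ⟪RS.orthRep J (RS.proj J y), RS.orthRep J η⟫) :
    0 ≤ ⟪RS.orthRep J ξ, RS.orthRep J η⟫ := by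
  obtain ⟨c, rfl⟩ := h
  rw [map_sum, sum_inner]
  refine Finset.sum_nonneg fun y hy => ?_
  rw [map_nsmul, ← Nat.cast_smul_eq_nsmul ℝ, real_inner_smul_left]
  exact mul_nonneg (Nat.cast_nonneg _) (hη y hy)

namespace IsHighest

variable {atil : V}

lemma isNonnegComb_sub (hatil : RS.IsHighest atil) (hJ : J ⊆ RS.base) {σ : RS.Qspace J}
    (hσ : σ ∈ RS.relRoots J) : RS.IsNonnegComb J (RS.proj J atil - σ) := by
  obtain ⟨⟨a, ha, rfl⟩, -⟩ := hσ
  rw [← map_sub]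
  exact IsPos.isNonnegComb_proj hJ (hatil.2 a ha)

lemma exists_proj_eq_sum (hatil : RS.IsHighest atil) (hirr : RS.Irred) (hJ : J ⊆ RS.base)
    (hJne : J.Nonempty) :
    ∃ d : V → ℕ, RS.proj J atil = ∑ b ∈ J, d b • RS.proj J b ∧ ∀ y ∈ J, 0 < d y := by
  obtain ⟨d, hd⟩ := hatil.isPos (hJne.mono hJ)
  refine ⟨d, by rw [hd, proj_sum_base hJ], fun y hy => ?_⟩
  have := hatil.coord_pos hirr (hJ hy)
  rw [hd, coord_sum subset_rfl (hJ hy)] at this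
  exact_mod_cast this

lemma proj_mem_relRoots (hatil : RS.IsHighest atil) (hirr : RS.Irred) (hJ : J ⊆ RS.base)
    (hJne : J.Nonempty) : RS.proj J atil ∈ RS.relRoots J := by
  obtain ⟨d, hd, hpos⟩ := hatil.exists_proj_eq_sum hirr hJ hJne
  obtain ⟨y, hy⟩ := hJne
  refine ⟨⟨atil, hatil.1, rfl⟩, fun h0 => (hpos y hy).ne' ?_⟩
  have := relCoord_sum hJ hy d
  rwa [← hd, Set.mem_singleton_iff.mp h0, map_zero, eq_comm, Nat.cast_eq_zero] at this

lemma isPosRel_proj (hatil : RS.IsHighest atil) (hirr : RS.Irred) (hJ : J ⊆ RS.base)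
    (hJne : J.Nonempty) : RS.IsPosRel J (RS.proj J atil) :=
  ⟨hatil.proj_mem_relRoots hirr hJ hJne, IsPos.isNonnegComb_proj hJ (hatil.isPos (hJne.mono hJ))⟩

lemma proj_not_mem_span_singleton (hatil : RS.IsHighest atil) (hirr : RS.Irred)
    (hJ : J ⊆ RS.base) (hrank : 2 ≤ J.card) {y₀ : V} (hy₀ : y₀ ∈ J) :
    RS.proj J atil ∉ ℝ ∙ RS.proj J y₀ := by
  obtain ⟨y, hy, hne⟩ := Finset.exists_mem_ne hrank y₀
  obtain ⟨d, hd, hpos⟩ := hatil.exists_proj_eq_sum hirr hJ ⟨y₀, hy₀⟩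
  intro hmem
  have := relCoord_eq_zero_of_mem_span_singleton hJ hy hy₀ hne hmem
  rw [hd, relCoord_sum hJ hy, Nat.cast_eq_zero] at this
  exact (hpos y hy).ne' this

lemma proj_mem_span (hatil : RS.IsHighest atil) (hirr : RS.Irred) (hJ : J ⊆ RS.base) {y₀ : V}
    (hy₀ : y₀ ∈ J) :
    RS.proj J y₀ ∈ span ℝ (insert (RS.proj J atil) (RS.proj J '' (J.erase y₀ : Set V))) := by
  obtain ⟨d, hd, hpos⟩ := hatil.exists_proj_eq_sum hirr hJ ⟨y₀, hy₀⟩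
  rw [← Finset.add_sum_erase J _ hy₀] at hd
  have hy₀eq : RS.proj J y₀ =
      (d y₀ : ℝ)⁻¹ • (RS.proj J atil - ∑ b ∈ J.erase y₀, d b • RS.proj J b) := by
    rw [hd, add_sub_cancel_right, ← Nat.cast_smul_eq_nsmul ℝ, smul_smul,
      inv_mul_cancel₀ (by exact_mod_cast (hpos y₀ hy₀).ne'), one_smul]
  rw [hy₀eq]
  refine Submodule.smul_mem _ _ (Submodule.sub_mem _ (Submodule.subset_span (Set.mem_insert _ _))
    (Submodule.sum_mem _ fun b hb => Submodule.smul_of_tower_mem _ _ ?_))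
  exact Submodule.subset_span (Set.mem_insert_of_mem _ (Set.mem_image_of_mem _ hb))

end IsHighest

/-! ### Raising a relative root to the highest one -/

lemma mem_span_isPosRel_not_mem_span_singleton {atil : V} (hatil : RS.IsHighest atil)
    (hirr : RS.Irred) (hJ : J ⊆ RS.base) (hrank : 2 ≤ J.card) {σ : RS.Qspace J}
    (hσ : σ ∈ RS.relRoots J) : σ ∈ span ℝ {τ | RS.IsPosRel J τ ∧ τ ∉ ℝ ∙ σ} := by
  by_cases h : ∃ y₀ ∈ J, RS.proj J y₀ ∈ ℝ ∙ σ
  · obtain ⟨y₀, hy₀, hmem⟩ := h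
    obtain ⟨a, ha⟩ := Submodule.mem_span_singleton.mp hmem
    have ha0 : a ≠ 0 := by
      rintro rfl
      exact proj_ne_zero hJ hy₀ (by rw [← ha, zero_smul])
    have hline : (ℝ ∙ σ) = ℝ ∙ RS.proj J y₀ := by
      rw [← ha, Submodule.span_singleton_smul_eq (IsUnit.mk0 a ha0)]
    have hσ' : σ = a⁻¹ • RS.proj J y₀ := by rw [← ha, smul_smul, inv_mul_cancel₀ ha0, one_smul]
    rw [hline, hσ']
    refine Submodule.smul_mem _ _ (Submodule.span_mono ?_ (hatil.proj_mem_span hirr hJ hy₀))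
    rintro τ (rfl | ⟨y, hy, rfl⟩)
    · exact ⟨hatil.isPosRel_proj hirr hJ ⟨y₀, hy₀⟩,
        hatil.proj_not_mem_span_singleton hirr hJ hrank hy₀⟩
    · obtain ⟨hne, hy⟩ := Finset.mem_erase.mp hy
      refine ⟨isPosRel_proj hJ hy, fun hmem => ?_⟩
      have := relCoord_eq_zero_of_mem_span_singleton hJ hy hy₀ hne hmem
      rw [relCoord_proj hy, coord_apply y (hJ hy), if_pos rfl] at this
      exact one_ne_zero this
  · push Not at h
    have hspan : σ ∈ span ℝ (RS.proj J '' (J : Set V)) := by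
      rcases isNonnegComb_or_neg hJ hσ with h' | h'
      · exact h'.mem_span
      · simpa using h'.mem_span
    refine Submodule.span_mono ?_ hspan
    rintro _ ⟨y, hy, rfl⟩
    exact ⟨isPosRel_proj hJ hy, h y hy⟩

/-- Otherwise `⟪σ, ·⟫` would vanish on a set spanning `σ`. -/
lemma exists_isPosRel_inner_ne_zero {atil : V} (hatil : RS.IsHighest atil) (hirr : RS.Irred)
    (hJ : J ⊆ RS.base) (hrank : 2 ≤ J.card) {σ : RS.Qspace J} (hσ : σ ∈ RS.relRoots J) :
    ∃ τ, RS.IsPosRel J τ ∧ τ ∉ ℝ ∙ σ ∧ ⟪RS.orthRep J σ, RS.orthRep J τ⟫ ≠ 0 := by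
  by_contra! h
  have hle : span ℝ {τ | RS.IsPosRel J τ ∧ τ ∉ ℝ ∙ σ} ≤
      LinearMap.ker (innerₛₗ ℝ (RS.orthRep J σ) ∘ₗ RS.orthRep J) :=
    Submodule.span_le.mpr fun τ hτ => h τ hτ.1 hτ.2
  have := LinearMap.mem_ker.mp
    (hle (mem_span_isPosRel_not_mem_span_singleton hatil hirr hJ hrank hσ))
  exact orthRep_ne_zero hσ.2 (inner_self_eq_zero.mp this)

lemma exists_isPosRel_add_mem_relRoots {atil : V} (hatil : RS.IsHighest atil) (hirr : RS.Irred)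
    (hJ : J ⊆ RS.base) (hrank : 2 ≤ J.card) {σ : RS.Qspace J} (hσ : σ ∈ RS.relRoots J)
    (hσθ : σ ≠ RS.proj J atil) :
    ∃ f, RS.IsPosRel J f ∧ σ + f ∈ RS.relRoots J ∧ ¬SameRay ℝ σ (-f) := by
  have hθ := hatil.proj_mem_relRoots hirr hJ (Finset.card_pos.mp (by omega))
  rcases isNonnegComb_or_neg hJ hσ with hpos | hneg
  · by_cases hdom : ∃ y ∈ J, ⟪RS.orthRep J σ, RS.orthRep J (RS.proj J y)⟫ < 0
    · obtain ⟨y, hy, hlt⟩ := hdom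
      have hray := hpos.not_sameRay_neg hJ (isNonnegComb_proj hy) hσ.2 (proj_ne_zero hJ hy)
      exact ⟨_, isPosRel_proj hJ hy, add_mem_relRoots_of_inner_neg hσ (proj_mem_relRoots hJ hy)
        hlt (add_ne_zero_of_not_sameRay_neg hray), hray⟩
    -- `σ` is dominant, so it is at an acute angle with the highest relative root.
    push Not at hdom
    have hθσ := hatil.isNonnegComb_sub hJ hσ
    have hinner : 0 < ⟪RS.orthRep J (RS.proj J atil), RS.orthRep J σ⟫ := by
      have h1 := real_inner_self_pos.mpr (orthRep_ne_zero hσ.2)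
      have h2 := hθσ.inner_orthRep_nonneg fun y hy => by rw [real_inner_comm]; exact hdom y hy
      calc 0 < ⟪RS.orthRep J σ, RS.orthRep J σ⟫ +
            ⟪RS.orthRep J (RS.proj J atil - σ), RS.orthRep J σ⟫ := by linarith
        _ = _ := by rw [← inner_add_left, ← map_add, add_sub_cancel]
    exact ⟨_, ⟨sub_mem_relRoots_of_inner_pos hθ hσ hinner hσθ.symm, hθσ⟩,
      by rwa [add_sub_cancel], hpos.not_sameRay_neg hJ hθσ hσ.2 (sub_ne_zero.mpr hσθ.symm)⟩
  · obtain ⟨τ, hτ, hτσ, hne⟩ := exists_isPosRel_inner_ne_zero hatil hirr hJ hrank hσ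
    rcases hne.lt_or_gt with hlt | hgt
    · have hray : ¬SameRay ℝ σ (-τ) := fun h =>
        hτσ (by simpa using mem_span_singleton_of_sameRay h hσ.2)
      exact ⟨τ, hτ, add_mem_relRoots_of_inner_neg hσ hτ.1 hlt
        (add_ne_zero_of_not_sameRay_neg hray), hray⟩
    · refine ⟨τ - σ, ⟨?_, ?_⟩, by rw [add_sub_cancel]; exact hτ.1, fun h => hτσ ?_⟩
      · refine sub_mem_relRoots_of_inner_pos hτ.1 hσ (by rwa [real_inner_comm]) ?_
        rintro rfl
        exact hτσ (Submodule.mem_span_singleton_self τ)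
      · rw [sub_eq_add_neg]
        exact IsNonnegComb.add hτ.2 hneg
      · simpa using Submodule.sub_mem _ (Submodule.mem_span_singleton_self σ)
          (mem_span_singleton_of_sameRay h hσ.2)

variable (RS) in
/-- Condition (3) appears as `¬SameRay ℝ x (-y)`: for nonzero `x` and `y`, `y` is not a negative
multiple of `x`. -/
def IsRaisingChain (J : Finset V) (σ : RS.Qspace J) (n : ℕ) (f : ℕ → RS.Qspace J) : Prop :=
  (∀ t < n, RS.IsPosRel J (f t)) ∧
  (∀ i ≤ n, σ + ∑ t ∈ Finset.range i, f t ∈ RS.relRoots J) ∧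
  ∀ i < n, ¬SameRay ℝ (σ + ∑ t ∈ Finset.range i, f t) (-f i)

lemma isRaisingChain_zero {σ : RS.Qspace J} (hσ : σ ∈ RS.relRoots J) (f : ℕ → RS.Qspace J) :
    RS.IsRaisingChain J σ 0 f :=
  ⟨by simp, fun i hi => by simpa [Nat.le_zero.mp hi] using hσ, by simp⟩

lemma IsRaisingChain.cons {σ f₀ : RS.Qspace J} {n : ℕ} {g : ℕ → RS.Qspace J}
    (hg : RS.IsRaisingChain J (σ + f₀) n g) (hσ : σ ∈ RS.relRoots J) (hf₀ : RS.IsPosRel J f₀)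
    (hray : ¬SameRay ℝ σ (-f₀)) :
    RS.IsRaisingChain J σ (n + 1) (fun | 0 => f₀ | t + 1 => g t) := by
  have hsum (i : ℕ) : σ + ∑ t ∈ Finset.range (i + 1), (fun | 0 => f₀ | t + 1 => g t) t =
      σ + f₀ + ∑ t ∈ Finset.range i, g t := by
    rw [Finset.sum_range_succ']
    abel
  obtain ⟨hpos, hroots, hrays⟩ := hg
  refine ⟨fun t ht => ?_, fun i hi => ?_, fun i hi => ?_⟩
  · cases t with
    | zero => exact hf₀
    | succ t => exact hpos t (by omega)
  · cases i with
    | zero => simpa using hσ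
    | succ i => rw [hsum]; exact hroots i (by omega)
  · cases i with
    | zero => simpa using hray
    | succ i => rw [hsum]; exact hrays i (by omega)

lemma exists_isRaisingChain {atil : V} (hatil : RS.IsHighest atil) (hirr : RS.Irred)
    (hJ : J ⊆ RS.base) (hrank : 2 ≤ J.card) (N : ℕ) {σ : RS.Qspace J} (hσ : σ ∈ RS.relRoots J)
    (hN : RS.relHeight J (RS.proj J atil - σ) ≤ N) :
    ∃ n f, RS.IsRaisingChain J σ n f ∧ σ + ∑ t ∈ Finset.range n, f t = RS.proj J atil := by
  induction N generalizing σ with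
  | zero =>
    obtain rfl | hθ := eq_or_ne σ (RS.proj J atil)
    · exact ⟨0, 0, isRaisingChain_zero hσ _, by simp⟩
    have := (hatil.isNonnegComb_sub hJ hσ).one_le_relHeight hJ (sub_ne_zero.mpr hθ.symm)
    push_cast at hN
    linarith
  | succ N ih =>
    obtain rfl | hθ := eq_or_ne σ (RS.proj J atil)
    · exact ⟨0, 0, isRaisingChain_zero hσ _, by simp⟩
    obtain ⟨f₀, hf₀, hσf₀, hray⟩ := exists_isPosRel_add_mem_relRoots hatil hirr hJ hrank hσ hθ
    have := IsNonnegComb.one_le_relHeight hJ hf₀.2 hf₀.1.2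
    obtain ⟨n, g, hg, hsum⟩ := ih hσf₀ (by
      rw [sub_add_eq_sub_sub, map_sub]
      push_cast at hN
      linarith)
    refine ⟨n + 1, _, hg.cons hσ hf₀ hray, ?_⟩
    rw [Finset.sum_range_succ', ← hsum]
    abel

end Relative

end RootSystemData

open RootSystemData in
theorem stmt7 {V : Type} [NormedAddCommGroup V] [InnerProductSpace ℝ V]
    (RS : RootSystemData V) (hirr : RS.Irred)
    (J : Finset V) (hJ : J ⊆ RS.base) (hrank : 2 ≤ J.card)
    (atil : V) (hatil : RS.IsHighest atil)
    (α : RS.Qspace J) (hα : α ∈ RS.relRoots J) :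
    ∃ (n : ℕ) (f : ℕ → RS.Qspace J),
      (∀ t < n, RS.IsPosRel J (f t)) ∧
      (∀ i, 1 ≤ i → i ≤ n → α + ∑ t ∈ Finset.range i, f t ∈ RS.relRoots J) ∧
      α + ∑ t ∈ Finset.range n, f t = RS.proj J atil ∧
      (∀ i < n, ¬ ∃ m k : ℕ, 0 < m ∧ 0 < k ∧
        (m : ℤ) • (α + ∑ t ∈ Finset.range i, f t) = -((k : ℤ) • f i)) := by
  obtain ⟨n, f, ⟨hpos, hroots, hray⟩, hsum⟩ := exists_isRaisingChain hatil hirr hJ hrank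
    ⌈RS.relHeight J (RS.proj J atil - α)⌉₊ hα (Nat.le_ceil _)
  refine ⟨n, f, hpos, fun i _ hi => hroots i hi, hsum, ?_⟩
  rintro i hi ⟨m, k, hm, hk, h⟩
  refine hray i hi (Or.inr (Or.inr ⟨m, k, by positivity, by positivity, ?_⟩))
  rw [natCast_zsmul, natCast_zsmul] at h
  rw [Nat.cast_smul_eq_nsmul, Nat.cast_smul_eq_nsmul, smul_neg, h]
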